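/- In the scalar (Abelian) case, let ψ be a smooth function of (t, x, λ) satisfying the linear equations (∂ᵏ₁ − λ∂_k + (∂_k û) + (∂_k u₀)∂_λ)ψ = 0 for all k. Then for any pair (k, q), ((∂ᵏ₁ + ∂_k û)∂_q − (∂ᵠ₁ + ∂_q û)∂_k)ψ = ((∂_q u₀)∂_k − (∂_k u₀)∂_q)∂_λ ψ, using the compatibility equations for the background fields. -/
import Mathlib


/-- In the scalar (Abelian) case, `L` is the commutative ring of smooth
functions of `(t, x, λ)`, with commuting coordinate derivations `Dk = ∂_k`,
`Dq = ∂_q`, `Dk1 = ∂ᵏ₁`, `Dq1 = ∂ᵠ₁`, `Dl = ∂_λ`, the derivations `Vk = ∂_k û`,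
`Vq = ∂_q û` given by the (λ-independent) vector fields, and `lam ∈ L` the coordinate
function `λ`.  The background fields satisfy the dispersionless compatibility system.
If `ψ` satisfies the linear equations `(∂ᵏ₁ − λ∂_k + ∂_k û + (∂_k u₀)∂_λ)ψ = 0` for
`k` and `q`, then
`((∂ᵏ₁ + ∂_k û)∂_q − (∂ᵠ₁ + ∂_q û)∂_k)ψ = ((∂_q u₀)∂_k − (∂_k u₀)∂_q)∂_λ ψ`. -/
theorem abelian_wave_function_identity {L : Type*} [CommRing L]
    (Dk Dq Dk1 Dq1 Dl Vk Vq : L → L)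
    (hDka : ∀ a b, Dk (a + b) = Dk a + Dk b)
    (hDkm : ∀ a b, Dk (a * b) = Dk a * b + a * Dk b)
    (hDqa : ∀ a b, Dq (a + b) = Dq a + Dq b)
    (hDqm : ∀ a b, Dq (a * b) = Dq a * b + a * Dq b)
    (hDk1a : ∀ a b, Dk1 (a + b) = Dk1 a + Dk1 b)
    (hDk1m : ∀ a b, Dk1 (a * b) = Dk1 a * b + a * Dk1 b)
    (hDq1a : ∀ a b, Dq1 (a + b) = Dq1 a + Dq1 b)
    (hDq1m : ∀ a b, Dq1 (a * b) = Dq1 a * b + a * Dq1 b)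
    (hDla : ∀ a b, Dl (a + b) = Dl a + Dl b)
    (hDlm : ∀ a b, Dl (a * b) = Dl a * b + a * Dl b)
    (hVka : ∀ a b, Vk (a + b) = Vk a + Vk b)
    (hVkm : ∀ a b, Vk (a * b) = Vk a * b + a * Vk b)
    (hVqa : ∀ a b, Vq (a + b) = Vq a + Vq b)
    (hVqm : ∀ a b, Vq (a * b) = Vq a * b + a * Vq b)
    -- coordinate derivations pairwise commute
    (hC1 : ∀ a, Dk (Dq a) = Dq (Dk a)) (hC2 : ∀ a, Dk (Dl a) = Dl (Dk a))
    (hC3 : ∀ a, Dq (Dl a) = Dl (Dq a)) (hC4 : ∀ a, Dk1 (Dk a) = Dk (Dk1 a))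
    (hC5 : ∀ a, Dk1 (Dq a) = Dq (Dk1 a)) (hC6 : ∀ a, Dk1 (Dl a) = Dl (Dk1 a))
    (hC7 : ∀ a, Dq1 (Dk a) = Dk (Dq1 a)) (hC8 : ∀ a, Dq1 (Dq a) = Dq (Dq1 a))
    (hC9 : ∀ a, Dq1 (Dl a) = Dl (Dq1 a)) (hC10 : ∀ a, Dk1 (Dq1 a) = Dq1 (Dk1 a))
    -- the vector fields ∂_k û, ∂_q û are λ-independent
    (hVkl : ∀ a, Dl (Vk a) = Vk (Dl a)) (hVql : ∀ a, Dl (Vq a) = Vq (Dl a))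
    -- [∂_q, ∂_k û] = [∂_k, ∂_q û]  (symmetry of ∂_q ∂_k û)
    (hVsym : ∀ a, Dq (Vk a) - Vk (Dq a) = Dk (Vq a) - Vq (Dk a))
    -- the coordinate function λ
    (lam : L)
    (hl1 : Dk lam = 0) (hl2 : Dq lam = 0) (hl3 : Dk1 lam = 0) (hl4 : Dq1 lam = 0)
    (hl5 : Dl lam = 1) (hl6 : Vk lam = 0) (hl7 : Vq lam = 0)
    -- background scalar field u₀ and the dispersionless compatibility equations
    (u0 : L)
    (hbg1 : ∀ a, Dk1 (Vq a) - Dq1 (Vk a) + (Vk (Vq a) - Vq (Vk a))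
        = Dk u0 * Dq a - Dq u0 * Dk a)
    (hbg2 : Dk1 (Dq u0) - Dq1 (Dk u0) + Vk (Dq u0) - Vq (Dk u0) = 0)
    -- u₀ is λ-independent
    (hu0l : Dl u0 = 0)
    -- the linear equations for ψ
    (ψ : L)
    (hlink : Dk1 ψ - lam * Dk ψ + Vk ψ + Dk u0 * Dl ψ = 0)
    (hlinq : Dq1 ψ - lam * Dq ψ + Vq ψ + Dq u0 * Dl ψ = 0) :
    (Dk1 (Dq ψ) + Vk (Dq ψ)) - (Dq1 (Dk ψ) + Vq (Dk ψ))
      = Dq u0 * Dk (Dl ψ) - Dk u0 * Dq (Dl ψ) := by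

  have hDq0 : Dq 0 = 0 := by have h := hDqa 0 0; rw [add_zero] at h; linear_combination -h
  have hDk0 : Dk 0 = 0 := by have h := hDka 0 0; rw [add_zero] at h; linear_combination -h
  have hDqn : ∀ a : L, Dq (-a) = -Dq a := by
    intro a; have h := hDqa a (-a); rw [add_neg_cancel, hDq0] at h; linear_combination -h
  have hDkn : ∀ a : L, Dk (-a) = -Dk a := by
    intro a; have h := hDka a (-a); rw [add_neg_cancel, hDk0] at h; linear_combination -h
  have h1 : Dq (Dk1 ψ) - lam * Dq (Dk ψ) + Dq (Vk ψ)
      + (Dq (Dk u0) * Dl ψ + Dk u0 * Dq (Dl ψ)) = 0 := by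
    have h := congrArg Dq hlink
    rw [hDq0] at h
    rw [hDqa, hDqa, sub_eq_add_neg, hDqa, hDqn, hDqm, hDqm, hl2] at h
    linear_combination h
  have h2 : Dk (Dq1 ψ) - lam * Dk (Dq ψ) + Dk (Vq ψ)
      + (Dk (Dq u0) * Dl ψ + Dq u0 * Dk (Dl ψ)) = 0 := by
    have h := congrArg Dk hlinq
    rw [hDk0] at h
    rw [hDka, hDka, sub_eq_add_neg, hDka, hDkn, hDkm, hDkm, hl1] at h
    linear_combination h
  linear_combination h1 - h2 + hC5 ψ - hC7 ψ - hVsym ψ - lam * hC1 ψ + Dl ψ * hC1 u0
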